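/- arXiv:2209.12743 — 3 statements merged into one kernel-verified Lean document; each statement's English description precedes it below -/
import Mathlib

section
/- For d in the open interval (0, π/2), the function f(d) = π/4 + (π/4 − d)·cos(2d) + (1/2)·sin(2d) satisfies 1/2 + π/4 ≤ f(d) < π/2. -/
open Real

lemma key_nonneg (t : ℝ) (ht : 0 ≤ t) (ht' : t ≤ π/4) :
    0 ≤ Real.sin t * (2*t*Real.cos t - Real.sin t) := by
  have hpi := Real.pi_gt_three
  have hs0 : 0 ≤ Real.sin t := Real.sin_nonneg_of_nonneg_of_le_pi ht (by linarith)
  have hs1 : Real.sin t ≤ t := Real.sin_le ht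
  have hc : Real.sqrt 2 / 2 ≤ Real.cos t := by
    have := Real.cos_le_cos_of_nonneg_of_le_pi ht (by linarith : π/4 ≤ π) ht'
    rwa [Real.cos_pi_div_four] at this
  have hsqrt : (1:ℝ) ≤ Real.sqrt 2 := by
    nlinarith [Real.sq_sqrt (by norm_num : (0:ℝ) ≤ 2), Real.sqrt_nonneg 2]
  have h2 : t ≤ 2*t*Real.cos t := by nlinarith
  nlinarith

lemma key_nonneg' (t : ℝ) (ht : |t| ≤ π/4) :
    0 ≤ Real.sin t * (2*t*Real.cos t - Real.sin t) := by
  rcases abs_cases t with ⟨h1, h2⟩ | ⟨h1, h2⟩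
  · exact key_nonneg t h2 (h1 ▸ ht)
  · have := key_nonneg (-t) (by linarith) (by rw [← h1]; exact ht)
    rw [Real.sin_neg, Real.cos_neg] at this
    nlinarith

theorem stmt0 (f : ℝ → ℝ)
    (hf : ∀ d, f d = π/4 + (π/4 - d) * Real.cos (2*d) + (1/2) * Real.sin (2*d)) :
    ∀ d ∈ Set.Ioo (0:ℝ) (π/2), 1/2 + π/4 ≤ f d ∧ f d < π/2 := by
  rintro d ⟨hd0, hd2⟩
  rw [hf d]
  constructor
  · -- lower bound
    set t := π/4 - d with hts
    clear_value t
    have habs : |t| ≤ π/4 := by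
      rw [abs_le]; constructor <;> simp [hts] <;> linarith
    have hkey := key_nonneg' t habs
    have hcos : Real.cos (2*d) = Real.sin (2*t) := by
      have : 2*d = π/2 - 2*t := by rw [hts]; ring
      rw [this, Real.cos_pi_div_two_sub]
    have hsin : Real.sin (2*d) = Real.cos (2*t) := by
      have : 2*d = π/2 - 2*t := by rw [hts]; ring
      rw [this, Real.sin_pi_div_two_sub]
    rw [hcos, hsin, Real.sin_two_mul, Real.cos_two_mul]
    have hpyth := Real.sin_sq_add_cos_sq t
    nlinarith [hkey, hpyth, Real.sin_sq_add_cos_sq t]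
  · -- upper bound
    rcases le_or_gt d (π/4) with h | h
    · have h1 : Real.cos (2*d) ≤ 1 := Real.cos_le_one _
      have h2 : Real.sin (2*d) < 2*d := Real.sin_lt (by linarith)
      have h3 : (0:ℝ) ≤ π/4 - d := by linarith
      nlinarith [mul_nonneg h3 (by linarith : (0:ℝ) ≤ 1 - Real.cos (2*d))]
    · have h1 : -1 ≤ Real.cos (2*d) := Real.neg_one_le_cos _
      have h2 : Real.sin (2*d) < π - 2*d := by
        have := Real.sin_lt (show (0:ℝ) < π - 2*d by linarith)
        rwa [Real.sin_pi_sub] at this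
      nlinarith [mul_nonneg (by linarith : (0:ℝ) ≤ d - π/4)
        (by linarith : (0:ℝ) ≤ Real.cos (2*d) + 1)]
end

section
/- For all d in (0, π/2), the function f₂(d) = π/4 − (1/3)(d − π/4)·cos(2d) − (1/6)·sin(2d) is strictly positive. -/
open Real

theorem stmt4 (f₂ : ℝ → ℝ)
    (hf₂ : ∀ d, f₂ d = π/4 - (1/3) * (d - π/4) * Real.cos (2*d) - (1/6) * Real.sin (2*d)) :
    ∀ d ∈ Set.Ioo (0:ℝ) (π/2), 0 < f₂ d := by
  intro d hd
  obtain ⟨h0, h1⟩ := hd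
  rw [hf₂]
  have hc1 := Real.cos_le_one (2*d)
  have hc2 := Real.neg_one_le_cos (2*d)
  have hs1 := Real.sin_le_one (2*d)
  have hpi := Real.pi_gt_three
  nlinarith [sq_nonneg (d - π/4), mul_self_nonneg (Real.cos (2*d))]
end

section
/- For all d in (0, π/2), with f(d) = π/4 + (π/4 − d)·cos(2d) + (1/2)·sin(2d), f'(d) = −2(π/4 − d)·sin(2d), and f₂(d) = π/4 − (1/3)(d − π/4)·cos(2d) − (1/6)·sin(2d), the expression f₂(d) + f''(d)/3 − f'(d)²/(4·f(d)) is strictly positive. -/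
open Real

theorem stmt5 (f f₂ : ℝ → ℝ)
    (hf : ∀ d, f d = π/4 + (π/4 - d) * Real.cos (2*d) + (1/2) * Real.sin (2*d))
    (hf₂ : ∀ d, f₂ d = π/4 - (1/3) * (d - π/4) * Real.cos (2*d) - (1/6) * Real.sin (2*d)) :
    ∀ d ∈ Set.Ioo (0:ℝ) (π/2),
      0 < f₂ d + (deriv (deriv f) d) / 3 - (deriv f d)^2 / (4 * f d) := by
  have hfe : f = fun d => π/4 + (π/4 - d) * Real.cos (2*d) + (1/2) * Real.sin (2*d) :=
    funext hf
  have hf' : deriv f = fun d => -2 * (π/4 - d) * Real.sin (2*d) := by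
    funext x
    have h1 : HasDerivAt (fun d : ℝ => 2*d) 2 x := by
      simpa using (hasDerivAt_id x).const_mul (2:ℝ)
    have hcos : HasDerivAt (fun d : ℝ => Real.cos (2*d)) (-Real.sin (2*x) * 2) x :=
      (Real.hasDerivAt_cos (2*x)).comp x h1
    have hsin : HasDerivAt (fun d : ℝ => Real.sin (2*d)) (Real.cos (2*x) * 2) x :=
      (Real.hasDerivAt_sin (2*x)).comp x h1
    have hlin : HasDerivAt (fun d : ℝ => π/4 - d) (-1) x := by
      simpa using (hasDerivAt_id x).const_sub (π/4)
    have H : HasDerivAt f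
        (0 + ((-1) * Real.cos (2*x) + (π/4 - x) * (-Real.sin (2*x) * 2))
          + (1/2) * (Real.cos (2*x) * 2)) x := by
      rw [hfe]
      exact ((hasDerivAt_const x (π/4)).add (hlin.mul hcos)).add (hsin.const_mul (1/2))
    have := H.deriv
    rw [this]; ring
  have hf'' : deriv (deriv f) = fun d => 2 * Real.sin (2*d) - 4 * (π/4 - d) * Real.cos (2*d) := by
    funext x
    have h1 : HasDerivAt (fun d : ℝ => 2*d) 2 x := by
      simpa using (hasDerivAt_id x).const_mul (2:ℝ)
    have hsin : HasDerivAt (fun d : ℝ => Real.sin (2*d)) (Real.cos (2*x) * 2) x :=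
      (Real.hasDerivAt_sin (2*x)).comp x h1
    have hlin : HasDerivAt (fun d : ℝ => -2 * (π/4 - d)) 2 x := by
      have : HasDerivAt (fun d : ℝ => π/4 - d) (-1) x := by
        simpa using (hasDerivAt_id x).const_sub (π/4)
      simpa using this.const_mul (-2 : ℝ)
    have H : HasDerivAt (deriv f)
        (2 * Real.sin (2*x) + (-2 * (π/4 - x)) * (Real.cos (2*x) * 2)) x := by
      rw [hf']
      exact hlin.mul hsin
    have := H.deriv
    rw [this]; ring
  intro d hd
  obtain ⟨hd0, hd2⟩ := hd
  set s := Real.sin (2*d) with hs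
  set c := Real.cos (2*d) with hc
  have hspos : 0 < s := Real.sin_pos_of_pos_of_lt_pi (by linarith) (by linarith)
  have hc1 : c ≤ 1 := Real.cos_le_one _
  have hc2 : -1 ≤ c := Real.neg_one_le_cos _
  have hsc : s^2 + c^2 = 1 := Real.sin_sq_add_cos_sq _
  have ha1 : π/4 - d < π/4 := by linarith
  have ha2 : -(π/4) < π/4 - d := by linarith
  have hfpos : 0 < f d := by
    rw [hf]
    nlinarith [mul_nonneg (sub_nonneg.2 hc1) (le_of_lt (by linarith : (0:ℝ) < π/4 - (π/4 - d))),
      mul_nonneg (by linarith : (0:ℝ) ≤ 1 + c) (le_of_lt (by linarith : (0:ℝ) < π/4 + (π/4 - d)))]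
  rw [hf₂, hf'', hf']
  simp only
  rw [← hs, ← hc]
  have h4f : 0 < 4 * f d := by linarith
  rw [sub_pos, div_lt_iff₀ h4f, hf, ← hs, ← hc]
  have haux : (π/4 - d)^2 * (s^2 + c^2) = (π/4 - d)^2 := by rw [hsc]; ring
  nlinarith [mul_pos (by linarith : (0:ℝ) < π/4 + s/2 - (π/4 - d))
      (by linarith : (0:ℝ) < π/4 + s/2 + (π/4 - d)), haux, hspos]
end
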